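/- For any α ∈ R, the open subset of the Klein bottle K_1 (with a = b = 2π) where sin(x−α)·sin(y) ≠ 0 has exactly two connected components. -/

import Mathlib

open Real

/-- The identification relation on `ℝ²` defining the flat Klein bottle `K_1`
(`a = b = 2π`): the group generated by `τ₁(x,y) = (x, y+2π)` and
`τ(x,y) = (x+π, 2π−y)` consists of the maps
`(x,y) ↦ (x + kπ, (−1)^k y + 2πl)`, `k, l ∈ ℤ`. -/
def kleinRel (p q : ℝ × ℝ) : Prop :=
  ∃ k l : ℤ, q.1 = p.1 + k * π ∧ q.2 = (-1 : ℝ) ^ k * p.2 + 2 * π * l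

/-- The flat Klein bottle `K_1` as a quotient topological space. -/
def KleinBottle : Type := Quot kleinRel

instance : TopologicalSpace KleinBottle := (instTopologicalSpaceQuot : TopologicalSpace (Quot kleinRel))

/-!
The function `u(x, y) = sin (x - α) * sin y` descends to a continuous function on `K_1`, which
is nonzero on the set `S` in question, so `{u > 0}` and `{u < 0}` are complementary clopen
subsets of `S`. Every point of `K_1` has a representative with `x ∈ [α, α + π)` and
`y ∈ [0, 2π)` (shift `x` by a multiple of `π`, then `y` by a multiple of `2π`). On `S` this
forces `x ∈ (α, α + π)`, where `sin (x - α) > 0`, so the sign of `u` is the sign of `sin y`.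
Hence `{u > 0}` and `{u < 0}` are the images of the rectangles `(α, α + π) × (0, π)` and
`(α, α + π) × (π, 2π)`, and are connected.
-/

open Set

section TwoComponents

variable {X : Type*} [TopologicalSpace X]

theorem IsClopen.card_connectedComponents_eq_two {s : Set X} (hs : IsClopen s)
    (hs_pre : IsPreconnected s) (hsc_pre : IsPreconnected sᶜ) (hs_ne : s.Nonempty)
    (hsc_ne : sᶜ.Nonempty) : Nat.card (ConnectedComponents X) = 2 := by
  obtain ⟨a, ha⟩ := hs_ne
  obtain ⟨b, hb⟩ := hsc_ne
  have coe_eq {t : Set X} (ht : IsPreconnected t) {x y : X} (hx : x ∈ t) (hy : y ∈ t) :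
      (x : ConnectedComponents X) = y :=
    ConnectedComponents.coe_eq_coe'.mpr (ht.subset_connectedComponent hy hx)
  refine Nat.card_eq_two_iff.mpr ⟨a, b, fun hab => hb ?_, ?_⟩
  · exact hs.connectedComponent_subset ha
      (ConnectedComponents.coe_eq_coe.mp hab ▸ mem_connectedComponent)
  · refine eq_univ_of_forall fun z => ?_
    obtain ⟨x, rfl⟩ := ConnectedComponents.surjective_coe z
    by_cases hx : x ∈ s
    · exact .inl (coe_eq hs_pre hx ha)
    · exact .inr (coe_eq hsc_pre hx hb)

theorem card_connectedComponents_setOf_ne_zero_eq_two {f : X → ℝ} (hf : Continuous f)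
    (hpos_pre : IsPreconnected {x | 0 < f x}) (hneg_pre : IsPreconnected {x | f x < 0})
    (hpos_ne : {x | 0 < f x}.Nonempty) (hneg_ne : {x | f x < 0}.Nonempty) :
    Nat.card (ConnectedComponents {x | f x ≠ 0}) = 2 := by
  let g : {x | f x ≠ 0} → ℝ := fun x => f x
  have hg : Continuous g := hf.comp continuous_subtype_val
  have hcompl : {x | 0 < g x}ᶜ = {x | g x < 0} := by
    ext x
    exact not_lt.trans ⟨fun h => h.lt_of_ne x.2, le_of_lt⟩
  have image_val {p : ℝ → Prop} (hp : ∀ t, p t → t ≠ 0) :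
      Subtype.val '' {x : {x | f x ≠ 0} | p (g x)} = {x | p (f x)} := by
    ext x
    exact ⟨by rintro ⟨x, hx, rfl⟩; exact hx, fun hx => ⟨⟨x, hp _ hx⟩, hx, rfl⟩⟩
  have preconnected {p : ℝ → Prop} (hp : ∀ t, p t → t ≠ 0) (h : IsPreconnected {x | p (f x)}) :
      IsPreconnected {x : {x | f x ≠ 0} | p (g x)} := by
    rwa [← Topology.IsInducing.subtypeVal.isPreconnected_image, image_val hp]
  refine IsClopen.card_connectedComponents_eq_two (s := {x | 0 < g x}) ⟨?_, ?_⟩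
    (preconnected (fun _ => ne_of_gt) hpos_pre) ?_ ?_ ?_
  · rw [← isOpen_compl_iff, hcompl]; exact isOpen_lt hg continuous_const
  · exact isOpen_lt continuous_const hg
  · rw [hcompl]; exact preconnected (fun _ => ne_of_lt) hneg_pre
  · simpa [← image_val (fun _ => ne_of_gt)] using hpos_ne
  · rw [hcompl]; simpa [← image_val (fun _ => ne_of_lt)] using hneg_ne

end TwoComponents

theorem Real.sin_pos_iff_of_mem_Ico {y : ℝ} (hy : y ∈ Ico 0 (2 * π)) :
    0 < sin y ↔ y ∈ Ioo 0 π := by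
  refine ⟨fun h => ⟨hy.1.lt_of_ne ?_, lt_of_not_ge fun hπy => h.not_ge ?_⟩, sin_pos_of_mem_Ioo⟩
  · rintro rfl; simp at h
  · have := sin_nonneg_of_nonneg_of_le_pi (sub_nonneg.2 hπy) (by linarith [hy.2])
    rw [sin_sub_pi] at this
    linarith

theorem Real.sin_neg_iff_of_mem_Ico {y : ℝ} (hy : y ∈ Ico 0 (2 * π)) :
    sin y < 0 ↔ y ∈ Ioo π (2 * π) := by
  refine ⟨fun h => ⟨lt_of_not_ge fun hyπ => h.not_ge ?_, hy.2⟩, fun h => ?_⟩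
  · exact sin_nonneg_of_nonneg_of_le_pi hy.1 hyπ
  · have := sin_pos_of_pos_of_lt_pi (sub_pos.2 h.1) (by linarith [h.2])
    rw [sin_sub_pi] at this
    linarith

theorem Real.sin_sub_pos_of_mem_Ioo {α x : ℝ} (hx : x ∈ Ioo α (α + π)) : 0 < sin (x - α) :=
  sin_pos_of_pos_of_lt_pi (by linarith [hx.1]) (by linarith [hx.2])

namespace KleinBottle

theorem sin_sub_mul_sin_eq_of_kleinRel (α : ℝ) {p q : ℝ × ℝ} (h : kleinRel p q) :
    sin (q.1 - α) * sin q.2 = sin (p.1 - α) * sin p.2 := by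
  obtain ⟨k, l, h1, h2⟩ := h
  have hsin_fst : sin (q.1 - α) = (-1) ^ k * sin (p.1 - α) := by
    rw [h1, add_sub_right_comm, sin_add_int_mul_pi]
  have hsin_snd : sin q.2 = (-1) ^ k * sin p.2 := by
    rw [h2, mul_comm (2 * π), sin_add_int_mul_two_pi]
    rcases Int.even_or_odd k with hk | hk
    · rw [hk.neg_one_zpow, one_mul, one_mul]
    · rw [hk.neg_one_zpow, neg_one_mul, neg_one_mul, sin_neg]
  have hsq : ((-1 : ℝ) ^ k) ^ 2 = 1 := by
    rw [← zpow_natCast, ← zpow_mul, mul_comm, zpow_mul, zpow_natCast, neg_one_sq, one_zpow]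
  rw [hsin_fst, hsin_snd]
  linear_combination (sin (p.1 - α) * sin p.2) * hsq

theorem exists_mk_eq_of_mem_Ico (α : ℝ) (z : KleinBottle) :
    ∃ p : ℝ × ℝ, Quot.mk kleinRel p = z ∧ p.1 - α ∈ Ico 0 π ∧ p.2 ∈ Ico 0 (2 * π) := by
  obtain ⟨p, rfl⟩ := Quot.exists_rep z
  let k := toIcoDiv pi_pos α p.1
  let l := toIcoDiv two_pi_pos 0 ((-1) ^ (-k) * p.2)
  refine ⟨(toIcoMod pi_pos α p.1, toIcoMod two_pi_pos 0 ((-1) ^ (-k) * p.2)), ?_, ?_, ?_⟩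
  · refine (Quot.sound ⟨-k, -l, ?_, ?_⟩).symm
    · simp [← self_sub_toIcoDiv_zsmul, k, sub_eq_add_neg]
    · simp only [← self_sub_toIcoDiv_zsmul, zpow_neg, zsmul_eq_mul, sub_eq_add_neg,
        Int.cast_neg, mul_neg, l]
      ring
  · simpa [sub_nonneg, sub_lt_iff_lt_add'] using toIcoMod_mem_Ico pi_pos α p.1
  · exact toIcoMod_mem_Ico' two_pi_pos _

noncomputable def sinMulSin (α : ℝ) : KleinBottle → ℝ :=
  Quot.lift (fun p => sin (p.1 - α) * sin p.2) fun _ _ h =>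
    (sin_sub_mul_sin_eq_of_kleinRel α h).symm

theorem continuous_sinMulSin (α : ℝ) : Continuous (sinMulSin α) :=
  continuous_quot_lift _ (by fun_prop)

theorem image_mk_setOf_ne_zero (α : ℝ) :
    Quot.mk kleinRel '' {p : ℝ × ℝ | sin (p.1 - α) * sin p.2 ≠ 0} = {z | sinMulSin α z ≠ 0} :=
  Quot.mk_surjective.image_preimage {z | sinMulSin α z ≠ 0}

theorem exists_mk_eq_of_sinMulSin_ne_zero {α : ℝ} {z : KleinBottle} (hz : sinMulSin α z ≠ 0) :
    ∃ p : ℝ × ℝ, Quot.mk kleinRel p = z ∧ p.1 ∈ Ioo α (α + π) ∧ p.2 ∈ Ico 0 (2 * π) := by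
  obtain ⟨p, rfl, h1, h2⟩ := exists_mk_eq_of_mem_Ico α z
  have hsin : sin (p.1 - α) ≠ 0 := left_ne_zero_of_mul hz
  have h1' := (sin_pos_iff_of_mem_Ico ⟨h1.1, by linarith [h1.2, pi_pos]⟩).1
    ((sin_nonneg_of_nonneg_of_le_pi h1.1 h1.2.le).lt_of_ne' hsin)
  exact ⟨p, rfl, ⟨by linarith [h1'.1], by linarith [h1'.2]⟩, h2⟩

theorem setOf_sinMulSin_pos (α : ℝ) :
    {z | 0 < sinMulSin α z} = Quot.mk kleinRel '' (Ioo α (α + π) ×ˢ Ioo 0 π) := by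
  refine subset_antisymm (fun z hz => ?_) ?_
  · obtain ⟨p, rfl, h1, h2⟩ := exists_mk_eq_of_sinMulSin_ne_zero (ne_of_gt hz)
    have hsin : 0 < sin p.2 := pos_of_mul_pos_right hz (sin_sub_pos_of_mem_Ioo h1).le
    exact ⟨p, ⟨h1, (sin_pos_iff_of_mem_Ico h2).1 hsin⟩, rfl⟩
  · rintro _ ⟨p, ⟨h1, h2⟩, rfl⟩
    exact mul_pos (sin_sub_pos_of_mem_Ioo h1) (sin_pos_of_mem_Ioo h2)

theorem setOf_sinMulSin_neg (α : ℝ) :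
    {z | sinMulSin α z < 0} = Quot.mk kleinRel '' (Ioo α (α + π) ×ˢ Ioo π (2 * π)) := by
  refine subset_antisymm (fun z hz => ?_) ?_
  · obtain ⟨p, rfl, h1, h2⟩ := exists_mk_eq_of_sinMulSin_ne_zero (ne_of_lt hz)
    have hsin : sin p.2 < 0 := neg_of_mul_neg_right hz (sin_sub_pos_of_mem_Ioo h1).le
    exact ⟨p, ⟨h1, (sin_neg_iff_of_mem_Ico h2).1 hsin⟩, rfl⟩
  · rintro _ ⟨p, ⟨h1, h2⟩, rfl⟩
    exact mul_neg_of_pos_of_neg (sin_sub_pos_of_mem_Ioo h1)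
      ((sin_neg_iff_of_mem_Ico ⟨by linarith [h2.1, pi_pos], h2.2⟩).2 h2)

theorem isPreconnected_image_mk_rect (α a b : ℝ) :
    IsPreconnected (Quot.mk kleinRel '' (Ioo α (α + π) ×ˢ Ioo a b)) :=
  ((convex_Ioo _ _).prod (convex_Ioo a b)).isPreconnected.image _
    continuous_quot_mk.continuousOn

theorem nonempty_image_mk_rect (α : ℝ) {a b : ℝ} (hab : a < b) :
    (Quot.mk kleinRel '' (Ioo α (α + π) ×ˢ Ioo a b)).Nonempty :=
  ((nonempty_Ioo.2 (lt_add_of_pos_right α pi_pos)).prod (nonempty_Ioo.2 hab)).image _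

theorem card_connectedComponents_setOf_sinMulSin_ne_zero (α : ℝ) :
    Nat.card (ConnectedComponents {z | sinMulSin α z ≠ 0}) = 2 := by
  have hπ := pi_pos
  refine card_connectedComponents_setOf_ne_zero_eq_two (continuous_sinMulSin α) ?_ ?_ ?_ ?_
  · rw [setOf_sinMulSin_pos]; exact isPreconnected_image_mk_rect α 0 π
  · rw [setOf_sinMulSin_neg]; exact isPreconnected_image_mk_rect α π (2 * π)
  · rw [setOf_sinMulSin_pos]; exact nonempty_image_mk_rect α hπ
  · rw [setOf_sinMulSin_neg]; exact nonempty_image_mk_rect α (by linarith)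

end KleinBottle

/-- for any `α ∈ ℝ`, the open subset of `K_1` where
`sin(x−α)·sin(y) ≠ 0` has exactly two connected components. -/
theorem two_nodal_domains_lambda3 (α : ℝ) :
    Nat.card (ConnectedComponents
      ↥(Quot.mk kleinRel '' {p : ℝ × ℝ | Real.sin (p.1 - α) * Real.sin p.2 ≠ 0})) = 2 := by
  rw [KleinBottle.image_mk_setOf_ne_zero]
  exact KleinBottle.card_connectedComponents_setOf_sinMulSin_ne_zero α
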